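/- arXiv:1111.1367 — 2 statements merged into one kernel-verified Lean document; each statement's English description precedes it below -/
import Mathlib

section
/- For any k-coloring c : ℕ^n → Fin k, if there exists a lexicographic embedding h : ℕ^n → ℕ^n such that c ∘ h is constant with value d, then there are infinitely many x₁ such that there are infinitely many x₂ such that … there are infinitely many xₙ with c(x₁,…,xₙ) = d. -/
/-- Strict lexicographic order on `Fin n → ℕ`. -/
def LexLt {n : ℕ} (x y : Fin n → ℕ) : Prop :=
  ∃ i : Fin n, (∀ j : Fin n, j < i → x j = y j) ∧ x i < y i

/-- A lexicographic embedding: strictly monotone for the lexicographic order. -/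
def LexEmb {n : ℕ} (h : (Fin n → ℕ) → (Fin n → ℕ)) : Prop :=
  ∀ x y : Fin n → ℕ, LexLt x y → LexLt (h x) (h y)

/-- `P` holds for infinitely many (unboundedly many) naturals. -/
def InfOften (P : ℕ → Prop) : Prop := ∀ b : ℕ, ∃ x, b ≤ x ∧ P x

/-- Nested "there exist infinitely many x₁ … infinitely many xₙ" quantifier. -/
def NestedInf : (n : ℕ) → ((Fin n → ℕ) → Prop) → Prop
  | 0, P => P ![]
  | n + 1, P => InfOften (fun x => NestedInf n (fun v => P (Fin.cons x v)))

namespace StmtAux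

lemma cons_lt_cons {n : ℕ} (a : ℕ) {v v' : Fin n → ℕ} (h : LexLt v v') :
    LexLt (Fin.cons a v) (Fin.cons a v') := by
  obtain ⟨i, hpre, hlt⟩ := h
  refine ⟨i.succ, ?_, by simpa using hlt⟩
  intro j hj
  rcases Fin.eq_zero_or_eq_succ j with rfl | ⟨j', rfl⟩
  · simp
  · have hj' : j' < i := by
      rwa [Fin.succ_lt_succ_iff] at hj
    simpa using hpre j' hj'

lemma cons_lt_of_fst {n : ℕ} {a a' : ℕ} (h : a < a') (v v' : Fin n → ℕ) :
    LexLt (Fin.cons a v) (Fin.cons a' v') := by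
  refine ⟨0, ?_, by simpa using h⟩
  intro j hj
  exact absurd hj (Fin.not_lt_zero j)

lemma add_lt {n : ℕ} (w : Fin n → ℕ) {v v' : Fin n → ℕ} (h : LexLt v v') :
    LexLt (w + v) (w + v') := by
  obtain ⟨i, hpre, hlt⟩ := h
  exact ⟨i, fun j hj => by simp [hpre j hj], by simpa using hlt⟩

lemma fst_le {n : ℕ} {x y : Fin (n + 1) → ℕ} (h : LexLt x y) : x 0 ≤ y 0 := by
  obtain ⟨i, hpre, hlt⟩ := h
  rcases eq_or_lt_of_le (Fin.zero_le i) with heq | hlt0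
  · rw [← heq] at hlt; exact hlt.le
  · exact (hpre 0 hlt0).le

lemma tail_lt {n : ℕ} {x y : Fin (n + 1) → ℕ} (h : LexLt x y) (h0 : x 0 = y 0) :
    LexLt (Fin.tail x) (Fin.tail y) := by
  obtain ⟨i, hpre, hlt⟩ := h
  rcases Fin.eq_zero_or_eq_succ i with rfl | ⟨j, rfl⟩
  · exact absurd h0 (ne_of_lt hlt)
  · refine ⟨j, ?_, hlt⟩
    intro j' hj'
    exact hpre j'.succ (Fin.succ_lt_succ_iff.mpr hj')

lemma trich {n : ℕ} (x y : Fin n → ℕ) : x = y ∨ LexLt x y ∨ LexLt y x := by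
  by_cases h : x = y
  · exact Or.inl h
  · have hne : ∃ i, x i ≠ y i := by
      by_contra hc; push_neg at hc; exact h (funext hc)
    classical
    set s : Finset (Fin n) := Finset.univ.filter fun i => x i ≠ y i with hs_def
    have hs : s.Nonempty := ⟨hne.choose, by simp [hs_def, hne.choose_spec]⟩
    set i := s.min' hs with hi
    have hmem : x i ≠ y i := by
      have := s.min'_mem hs
      simpa [hs_def] using this
    have hpre : ∀ j, j < i → x j = y j := by
      intro j hj
      by_contra hcj
      have : i ≤ j := s.min'_le j (by simp [hs_def, hcj])
      exact absurd hj (not_lt.mpr this)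
    rcases lt_or_gt_of_ne hmem with hlt | hgt
    · exact Or.inr (Or.inl ⟨i, hpre, hlt⟩)
    · exact Or.inr (Or.inr ⟨i, fun j hj => (hpre j hj).symm, hgt⟩)

lemma not_add_lt {n : ℕ} (w v : Fin n → ℕ) : ¬ LexLt (w + v) w := by
  rintro ⟨i, _, hlt⟩
  simp at hlt

lemma maxAttained {α : Type*} (f : α → ℕ) (q : ℕ) (hb : ∀ x, f x ≤ q) (x : α) :
    ∃ x₀, ∀ y, f y ≤ f x₀ := by
  by_contra hc
  push_neg at hc
  have key : ∀ k, ∃ z, k ≤ f z := by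
    intro k
    induction k with
    | zero => exact ⟨x, Nat.zero_le _⟩
    | succ k ih =>
      obtain ⟨x', hx'⟩ := ih
      obtain ⟨y, hy⟩ := hc x'
      exact ⟨y, Nat.succ_le_of_lt (lt_of_le_of_lt hx' hy)⟩
  obtain ⟨z, hz⟩ := key (q + 1)
  exact absurd (hb z) (by omega)

lemma boundedReduce {p n : ℕ} (g : (Fin p → ℕ) → (Fin (n + 1) → ℕ))
    (hmono : ∀ x y, LexLt x y → LexLt (g x) (g y))
    (q : ℕ) (hb : ∀ x, g x 0 ≤ q) :
    ∃ (x₀ : Fin p → ℕ) (G : (Fin p → ℕ) → (Fin n → ℕ)),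
      (∀ x y, LexLt x y → LexLt (G x) (G y)) ∧
      (∀ x, g (x₀ + x) = Fin.cons (g x₀ 0) (G x)) := by
  obtain ⟨x₀, hx₀⟩ := maxAttained (fun x => g x 0) q hb 0
  have hfst : ∀ x, g (x₀ + x) 0 = g x₀ 0 := by
    intro x
    have hle : g x₀ 0 ≤ g (x₀ + x) 0 := by
      rcases trich x₀ (x₀ + x) with heq | hlt | hgt
      · rw [← heq]
      · exact fst_le (hmono _ _ hlt)
      · exact absurd hgt (not_add_lt _ _)
    exact le_antisymm (hx₀ _) hle
  refine ⟨x₀, fun x => Fin.tail (g (x₀ + x)), ?_, ?_⟩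
  · intro x y hxy
    exact tail_lt (hmono _ _ (add_lt x₀ hxy)) (by rw [hfst, hfst])
  · intro x
    rw [← hfst x]
    exact (Fin.cons_self_tail _).symm

lemma noEmb : ∀ n (g : (Fin (n + 1) → ℕ) → (Fin n → ℕ)),
    (∀ x y, LexLt x y → LexLt (g x) (g y)) → False := by
  intro n
  induction n with
  | zero =>
    intro g hm
    have h01 : LexLt (fun _ : Fin 1 => 0) (fun _ : Fin 1 => 1) :=
      ⟨0, fun j hj => absurd hj (Fin.not_lt_zero j), Nat.zero_lt_one⟩
    obtain ⟨i, -, -⟩ := hm _ _ h01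
    exact i.elim0
  | succ n ih =>
    intro g hm
    have hb : ∀ v : Fin (n + 1) → ℕ,
        g (Fin.cons 0 v) 0 ≤ g (Fin.cons 1 0) 0 :=
      fun v => fst_le (hm _ _ (cons_lt_of_fst Nat.zero_lt_one v 0))
    obtain ⟨x₀, G, hG, -⟩ := boundedReduce (fun v => g (Fin.cons 0 v))
      (fun x y h => hm _ _ (cons_lt_cons 0 h)) _ hb
    exact ih G hG

lemma main : ∀ n (S : (Fin n → ℕ) → Prop) (g : (Fin n → ℕ) → (Fin n → ℕ)),
    (∀ x y, LexLt x y → LexLt (g x) (g y)) → (∀ v, S (g v)) → NestedInf n S := by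
  intro n
  induction n with
  | zero =>
    intro S g _ hS
    have hg : g ![] = ![] := funext fun i => i.elim0
    have := hS ![]
    rw [hg] at this
    exact this
  | succ n ih =>
    intro S g hmono hS
    show InfOften _
    intro b
    have hex : ∃ x, b ≤ g x 0 := by
      by_contra hc
      push_neg at hc
      obtain ⟨x₀, G, hG, -⟩ := boundedReduce g hmono b (fun x => (hc x).le)
      exact (noEmb n G hG).elim
    obtain ⟨xs, hxs⟩ := hex
    set g₁ : (Fin n → ℕ) → (Fin (n + 1) → ℕ) :=
      fun v => g (xs + Fin.cons 0 v) with hg₁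
    have hmono₁ : ∀ v v', LexLt v v' → LexLt (g₁ v) (g₁ v') :=
      fun v v' h => hmono _ _ (add_lt xs (cons_lt_cons 0 h))
    have hlow : ∀ v, b ≤ g₁ v 0 := by
      intro v
      refine le_trans hxs ?_
      rcases trich xs (xs + Fin.cons 0 v) with heq | hlt | hgt
      · exact le_of_eq (congrArg (· 0) (congrArg g heq))
      · exact fst_le (hmono _ _ hlt)
      · exact absurd hgt (not_add_lt _ _)
    have hb₁ : ∀ v, g₁ v 0 ≤ g (xs + Fin.cons 1 0) 0 :=
      fun v => fst_le (hmono _ _ (add_lt xs (cons_lt_of_fst Nat.zero_lt_one v 0)))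
    obtain ⟨v₀, G, hG, hGeq⟩ := boundedReduce g₁ hmono₁ _ hb₁
    refine ⟨g₁ v₀ 0, hlow v₀, ?_⟩
    refine ih (fun v => S (Fin.cons (g₁ v₀ 0) v)) G hG ?_
    intro v
    have h1 : S (g₁ (v₀ + v)) := hS _
    rwa [hGeq v] at h1

end StmtAux

theorem stmt4 {n k : ℕ} (c : (Fin n → ℕ) → Fin k) (d : Fin k)
    (h : (Fin n → ℕ) → (Fin n → ℕ)) (hemb : LexEmb h)
    (hconst : ∀ x, c (h x) = d) :
    NestedInf n (fun v => c v = d) := by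
  exact StmtAux.main n (fun v => c v = d) h hemb hconst
end

section
/- For a coloring c : ℕ^n → Fin k, Player ⊕ has a winning strategy in the game G_n(c) if and only if there is a strong lexicographic embedding h : ℕ^n → ℕ^n such that c ∘ h is constant. -/
/-- A strong lexicographic embedding: the `i`-th coordinate of `h x` depends
only on `x₁, …, x_i`. -/
def StrongLexEmb {n : ℕ} (h : (Fin n → ℕ) → (Fin n → ℕ)) : Prop :=
  LexEmb h ∧ ∀ i : Fin n, ∀ x y : Fin n → ℕ,
    (∀ j : Fin n, j ≤ i → x j = y j) → h x i = h y i

/-- The moves of Player ⊕ determined by the strategy `σ` against the sequence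
`a` of moves of Player ⊖: `b i = σ ⟨a 0, …, a i⟩`. -/
def playedBy {n : ℕ} (σ : List ℕ → ℕ) (a : Fin n → ℕ) (i : Fin n) : ℕ :=
  σ (List.ofFn fun j : Fin (i.val + 1) =>
      a ⟨j.val, lt_of_le_of_lt (Nat.le_of_lt_succ j.isLt) i.isLt⟩)

/-- Player ⊕ has a winning strategy in the game `G_n(c)` with initial color choice `d`. -/
def PlusWinsWith {n k : ℕ} (c : (Fin n → ℕ) → Fin k) (d : Fin k) : Prop :=
  ∃ σ : List ℕ → ℕ, ∀ a : Fin n → ℕ,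
    (∀ i : Fin n, a i ≤ playedBy σ a i) ∧ c (playedBy σ a) = d

/-- Player ⊕ has a winning strategy in the game `G_n(c)`. -/
def PlusWins {n k : ℕ} (c : (Fin n → ℕ) → Fin k) : Prop :=
  ∃ d : Fin k, PlusWinsWith c d

namespace S13

/-- `⊖`-move forced by previous `⊖`-moves `p` and chosen value `t`. -/
def aval (σ : List ℕ → ℕ) (p : List ℕ) : ℕ → ℕ
  | 0 => 0
  | t + 1 => σ (p ++ [aval σ p t]) + 1

/-- List of `⊖`-moves forced by chosen values `x 0, …, x (m-1)`. -/
def AX (σ : List ℕ → ℕ) (x : ℕ → ℕ) : ℕ → List ℕ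
  | 0 => []
  | m + 1 => AX σ x m ++ [aval σ (AX σ x m) (x m)]

def extF {n : ℕ} (x : Fin n → ℕ) (j : ℕ) : ℕ := if h : j < n then x ⟨j, h⟩ else 0

def hS {n : ℕ} (σ : List ℕ → ℕ) (x : Fin n → ℕ) (i : Fin n) : ℕ :=
  σ (AX σ (extF x) (i.val + 1))

def afun {n : ℕ} (σ : List ℕ → ℕ) (x : Fin n → ℕ) (i : Fin n) : ℕ :=
  aval σ (AX σ (extF x) i.val) (x i)

lemma AX_congr (σ : List ℕ → ℕ) (x y : ℕ → ℕ) (m : ℕ) (hxy : ∀ j, j < m → x j = y j) :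
    AX σ x m = AX σ y m := by
  induction m with
  | zero => rfl
  | succ m ih =>
    have h1 : AX σ x m = AX σ y m := ih fun j hj => hxy j (Nat.lt_succ_of_lt hj)
    simp [AX, h1, hxy m (Nat.lt_succ_self m)]

lemma ofFn_aval (σ : List ℕ → ℕ) (u : ℕ → ℕ) (m : ℕ) :
    List.ofFn (fun j : Fin m => aval σ (AX σ u j.val) (u j.val)) = AX σ u m := by
  induction m with
  | zero => rfl
  | succ m ih =>
    rw [List.ofFn_succ']
    simp only [Fin.coe_castSucc, Fin.val_last, List.concat_eq_append]
    rw [ih]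
    rfl

lemma playedBy_afun (σ : List ℕ → ℕ) {n : ℕ} (x : Fin n → ℕ) (i : Fin n) :
    playedBy σ (afun σ x) i = hS σ x i := by
  unfold playedBy hS
  congr 1
  have : ∀ j : Fin (i.val + 1),
      afun σ x ⟨j.val, lt_of_le_of_lt (Nat.le_of_lt_succ j.isLt) i.isLt⟩ =
      aval σ (AX σ (extF x) j.val) (extF x j.val) := by
    intro j
    unfold afun extF
    rw [dif_pos (lt_of_le_of_lt (Nat.le_of_lt_succ j.isLt) i.isLt)]
  simp only [this]
  exact ofFn_aval σ (extF x) (i.val + 1)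

lemma hS_congr (σ : List ℕ → ℕ) {n : ℕ} (i : Fin n) (x y : Fin n → ℕ)
    (hxy : ∀ j : Fin n, j ≤ i → x j = y j) : hS σ x i = hS σ y i := by
  unfold hS
  congr 1
  apply AX_congr
  intro j hj
  unfold extF
  have hjn : j < n := lt_of_lt_of_le hj i.isLt
  rw [dif_pos hjn, dif_pos hjn]
  exact hxy ⟨j, hjn⟩ (by simpa [Fin.le_def] using Nat.lt_succ_iff.mp hj)


lemma hS_step (σ : List ℕ → ℕ) {n : ℕ}
    (Hwin : ∀ a : Fin n → ℕ, ∀ i : Fin n, a i ≤ playedBy σ a i)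
    (x : Fin n → ℕ) (i : Fin n) (t : ℕ) (hx : x i = t + 1) :
    hS σ (Function.update x i t) i < hS σ x i := by
  have h1 := Hwin (afun σ x) i
  rw [playedBy_afun] at h1
  set P := AX σ (extF x) i.val with hP
  have hAX : AX σ (extF (Function.update x i t)) i.val = P := by
    apply AX_congr
    intro j hj
    have hjn : j < n := lt_trans hj i.isLt
    unfold extF
    rw [dif_pos hjn, dif_pos hjn, Function.update_of_ne]
    exact Fin.ne_of_lt (by simpa [Fin.lt_def] using hj)
  have hti : extF (Function.update x i t) i.val = t := by
    unfold extF
    rw [dif_pos i.isLt]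
    simp
  have h2 : hS σ (Function.update x i t) i = σ (P ++ [aval σ P t]) := by
    unfold hS
    rw [show AX σ (extF (Function.update x i t)) (i.val + 1)
        = AX σ (extF (Function.update x i t)) i.val
          ++ [aval σ (AX σ (extF (Function.update x i t)) i.val)
              (extF (Function.update x i t) i.val)] from rfl, hAX, hti]
  have h3 : afun σ x i = σ (P ++ [aval σ P t]) + 1 := by
    unfold afun
    rw [hx, ← hP]
    rfl
  omega

lemma hS_mono (σ : List ℕ → ℕ) {n : ℕ}
    (Hwin : ∀ a : Fin n → ℕ, ∀ i : Fin n, a i ≤ playedBy σ a i)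
    (x y : Fin n → ℕ) (i : Fin n)
    (hagree : ∀ j : Fin n, j < i → x j = y j) (hlt : x i < y i) :
    hS σ x i < hS σ y i := by
  have hf : StrictMono (fun t => hS σ (Function.update y i t) i) := by
    apply strictMono_nat_of_lt_succ
    intro t
    have := hS_step σ Hwin (Function.update y i (t + 1)) i t (by simp)
    rwa [Function.update_idem] at this
  have hx : hS σ x i = hS σ (Function.update y i (x i)) i := by
    apply hS_congr
    intro j hj
    rcases eq_or_lt_of_le hj with heq | hl
    · rw [heq]; simp
    · rw [Function.update_of_ne (Fin.ne_of_lt hl)]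
      exact hagree j hl
  have hy : hS σ y i = hS σ (Function.update y i (y i)) i := by
    rw [Function.update_eq_self]
  rw [hx, hy]
  exact hf hlt

lemma forward {n k : ℕ} (c : (Fin n → ℕ) → Fin k) :
    PlusWins c → ∃ h : (Fin n → ℕ) → (Fin n → ℕ),
      StrongLexEmb h ∧ ∃ d : Fin k, ∀ x, c (h x) = d := by
  rintro ⟨d, σ, hw⟩
  have Hwin : ∀ a : Fin n → ℕ, ∀ i : Fin n, a i ≤ playedBy σ a i := fun a => (hw a).1
  refine ⟨hS σ, ⟨?_, fun i x y hxy => hS_congr σ i x y hxy⟩, d, ?_⟩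
  · rintro x y ⟨i, hagree, hlt⟩
    exact ⟨i, fun j hj => hS_congr σ j x y
      (fun j' hj' => hagree j' (lt_of_le_of_lt hj' hj)),
      hS_mono σ Hwin x y i hagree hlt⟩
  · intro x
    have h2 := (hw (afun σ x)).2
    rwa [show playedBy σ (afun σ x) = hS σ x from funext (playedBy_afun σ x)] at h2


/-- Fill coordinates: `p` below `i`, `t` at `i`, `0` above. -/
def W {n : ℕ} (p : Fin n → ℕ) (i : Fin n) (t : ℕ) (j : Fin n) : ℕ :=
  if j < i then p j else if j = i then t else 0

lemma unbdd {n : ℕ} {h : (Fin n → ℕ) → (Fin n → ℕ)} (H : StrongLexEmb h) :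
    ∀ (r : ℕ) (i : Fin n), n = i.val + r →
      ∀ (p : Fin n → ℕ) (t : ℕ), h (W p i t) i < h (W p i (t + 1)) i := by
  intro r
  induction r using Nat.strong_induction_on with
  | _ r IH =>
    intro i hr p t
    have hlex : LexLt (W p i t) (W p i (t + 1)) :=
      ⟨i, fun j hj => by simp [W, hj], by simp [W]⟩
    obtain ⟨i', he, hlt⟩ := H.1 _ _ hlex
    have hagree : ∀ j : Fin n, j < i → h (W p i t) j = h (W p i (t + 1)) j := by
      intro j hj
      apply H.2 j
      intro j' hj'
      have hj'i : j' < i := lt_of_le_of_lt hj' hj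
      simp [W, hj'i]
    have hii : i ≤ i' := by
      by_contra hc
      push_neg at hc
      exact absurd (hagree i' hc) (Nat.ne_of_lt hlt)
    rcases eq_or_lt_of_le hii with heq | hgt
    · exact heq ▸ hlt
    · exfalso
      have hi1 : i.val + 1 < n := lt_of_le_of_lt hgt i'.isLt
      set i₁ : Fin n := ⟨i.val + 1, hi1⟩ with hi₁
      have hrpos : 2 ≤ r := by omega
      set p' := W p i t with hp'
      have IH' := IH (r - 1) (by omega) i₁ (by simp [hi₁]; omega)
      have hFmono : StrictMono (fun s => h (W p' i₁ s) i₁) :=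
        strictMono_nat_of_lt_succ (fun s => IH' p' s)
      set v := h (W p i (t + 1)) with hv
      have hui : h (W p i t) i = v i := he i hgt
      obtain ⟨s, hs⟩ : ∃ s, v i₁ < h (W p' i₁ s) i₁ :=
        ⟨v i₁ + 1, lt_of_lt_of_le (Nat.lt_succ_self _) hFmono.le_apply⟩
      have hii₁ : i < i₁ := by simp [Fin.lt_def, hi₁]
      have hlex2 : LexLt (W p' i₁ s) (W p i (t + 1)) := by
        refine ⟨i, ?_, ?_⟩
        · intro j hj
          have hj1 : j < i₁ := lt_trans hj hii₁
          simp [W, hj1, hj, hp', lt_trans hj hii₁]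
        · simp [W, hii₁, hp']
      obtain ⟨i'', he2, hlt2⟩ := H.1 _ _ hlex2
      have hag2 : ∀ j : Fin n, j ≤ i → h (W p' i₁ s) j = v j := by
        intro j hj
        rcases eq_or_lt_of_le hj with heqj | hlj
        · subst heqj
          have e1 : h (W p' i₁ s) j = h (W p j t) j := by
            apply H.2 j
            intro j' hj'
            have hj'1 : j' < i₁ := lt_of_le_of_lt hj' hii₁
            rcases eq_or_lt_of_le hj' with heq' | hl'
            · rw [heq']
              simp [W, hii₁, hp', lt_irrefl]
            · simp [W, hj'1, hp', hl']
          rw [e1]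
          exact hui
        · have e1 : h (W p' i₁ s) j = h (W p i (t + 1)) j := by
            apply H.2 j
            intro j' hj'
            have hj'i : j' < i := lt_of_le_of_lt hj' hlj
            simp [W, lt_trans hj'i hii₁, hj'i, hp']
          exact e1
      have hi''₁ : i₁ ≤ i'' := by
        by_contra hc
        push_neg at hc
        have hle : i'' ≤ i := by
          rw [Fin.le_def]
          rw [Fin.lt_def] at hc
          simp [hi₁] at hc
          omega
        exact absurd (hag2 i'' hle) (Nat.ne_of_lt hlt2)
      have hle2 : h (W p' i₁ s) i₁ ≤ v i₁ := by
        rcases eq_or_lt_of_le hi''₁ with heq2 | hgt2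
        · exact le_of_lt (heq2 ▸ hlt2)
        · exact le_of_eq (he2 i₁ hgt2)
      omega


def extN {n : ℕ} (q : List ℕ) (j : Fin n) : ℕ := q.getD j.val 0

open Classical in
noncomputable def pick {n : ℕ} (h : (Fin n → ℕ) → (Fin n → ℕ)) (p : List ℕ) (a : ℕ) : ℕ :=
  if hp : p.length < n then
    (if H : ∃ t, a ≤ h (extN (p ++ [t])) ⟨p.length, hp⟩ then Nat.find H else 0)
  else 0

noncomputable def XL {n : ℕ} (h : (Fin n → ℕ) → (Fin n → ℕ)) (a : ℕ → ℕ) : ℕ → List ℕ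
  | 0 => []
  | m + 1 => XL h a m ++ [pick h (XL h a m) (a m)]

noncomputable def sigmaOf {n : ℕ} (h : (Fin n → ℕ) → (Fin n → ℕ)) (l : List ℕ) : ℕ :=
  if hl : l.length - 1 < n then
    h (extN (XL h (fun j => l.getD j 0) l.length)) ⟨l.length - 1, hl⟩
  else 0

lemma XL_length {n : ℕ} (h : (Fin n → ℕ) → (Fin n → ℕ)) (a : ℕ → ℕ) (m : ℕ) :
    (XL h a m).length = m := by
  induction m with
  | zero => rfl
  | succ m ih => simp [XL, ih]

lemma XL_congr {n : ℕ} (h : (Fin n → ℕ) → (Fin n → ℕ)) (a b : ℕ → ℕ) (m : ℕ)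
    (hab : ∀ j, j < m → a j = b j) : XL h a m = XL h b m := by
  induction m with
  | zero => rfl
  | succ m ih =>
    have h1 : XL h a m = XL h b m := ih fun j hj => hab j (Nat.lt_succ_of_lt hj)
    simp [XL, h1, hab m (Nat.lt_succ_self m)]

lemma XL_getD_stable {n : ℕ} (h : (Fin n → ℕ) → (Fin n → ℕ)) (a : ℕ → ℕ)
    (m m' : ℕ) (hmm : m ≤ m') (j : ℕ) (hj : j < m) :
    (XL h a m').getD j 0 = (XL h a m).getD j 0 := by
  induction m' , hmm using Nat.le_induction with
  | base => rfl
  | succ m' hmm ih =>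
    rw [← ih]
    have hj' : j < (XL h a m').length := by rw [XL_length]; omega
    simp [XL, List.getD, List.getElem?_append_left hj']

lemma pick_spec {n : ℕ} {h : (Fin n → ℕ) → (Fin n → ℕ)} (H : StrongLexEmb h)
    (p : List ℕ) (i : Fin n) (hip : p.length = i.val) (a : ℕ) :
    a ≤ h (extN (p ++ [pick h p a])) i := by
  obtain ⟨iv, hiv⟩ := i
  simp only [] at hip
  subst hip
  have hp : p.length < n := hiv
  have hext : ∀ t, extN (p ++ [t]) = W (extN p) ⟨p.length, hp⟩ t := by
    intro t
    funext j
    unfold extN W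
    rcases lt_trichotomy j.val p.length with hlt | heq | hgt
    · rw [if_pos (show j < ⟨p.length, hp⟩ from hlt)]
      simp [extN, List.getD, List.getElem?_append_left hlt]
    · have hje : j = (⟨p.length, hp⟩ : Fin n) := Fin.ext heq
      rw [if_neg (by rw [hje]; exact lt_irrefl _), if_pos hje, hje]
      simp [List.getD]
    · have hne : ¬ (j < (⟨p.length, hp⟩ : Fin n)) := by
        rw [Fin.lt_def]
        show ¬ (j.val < p.length)
        omega
      have hne2 : j ≠ (⟨p.length, hp⟩ : Fin n) := by
        intro hc; rw [hc] at hgt; simp at hgt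
      rw [if_neg hne, if_neg hne2]
      have : (p ++ [t]).length ≤ j.val := by simp; omega
      simp [List.getD, List.getElem?_eq_none this]
  have hmono : StrictMono (fun t => h (W (extN p) ⟨p.length, hp⟩ t) ⟨p.length, hp⟩) :=
    strictMono_nat_of_lt_succ
      (fun t => unbdd H (n - p.length) ⟨p.length, hp⟩
        (by show n = p.length + (n - p.length); omega) (extN p) t)
  have He : ∃ t, a ≤ h (extN (p ++ [t])) ⟨p.length, hp⟩ :=
    ⟨a, by rw [hext]; exact hmono.le_apply⟩
  rw [pick, dif_pos hp, dif_pos He]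
  rw [hext]
  have := Nat.find_spec He
  rwa [hext] at this

lemma playedBy_sigma {n : ℕ} (h : (Fin n → ℕ) → (Fin n → ℕ)) (a : Fin n → ℕ) (i : Fin n) :
    playedBy (sigmaOf h) a i = h (extN (XL h (extF a) (i.val + 1))) i := by
  unfold playedBy sigmaOf
  set L := List.ofFn fun j : Fin (i.val + 1) =>
      a ⟨j.val, lt_of_le_of_lt (Nat.le_of_lt_succ j.isLt) i.isLt⟩ with hL
  have hLlen : L.length = i.val + 1 := by rw [hL, List.length_ofFn]
  have hcond : L.length - 1 < n := by rw [hLlen]; simp [i.isLt]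
  rw [dif_pos hcond]
  have hXL : XL h (fun j => L.getD j 0) L.length = XL h (extF a) (i.val + 1) := by
    rw [hLlen]
    apply XL_congr
    intro j hj
    have hjn : j < n := lt_of_le_of_lt (Nat.lt_succ_iff.mp hj) i.isLt
    rw [hL]
    have hj2 : j < (List.ofFn fun j : Fin (i.val + 1) =>
        a ⟨j.val, lt_of_le_of_lt (Nat.le_of_lt_succ j.isLt) i.isLt⟩).length := by
      simpa using hj
    rw [List.getD_eq_getElem _ _ hj2, List.getElem_ofFn]
    unfold extF
    rw [dif_pos hjn]
  rw [hXL]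
  have hfin : (⟨L.length - 1, hcond⟩ : Fin n) = i := Fin.ext (by show L.length - 1 = i.val; omega)
  rw [hfin]

lemma backward {n k : ℕ} (c : (Fin n → ℕ) → Fin k) :
    (∃ h : (Fin n → ℕ) → (Fin n → ℕ),
      StrongLexEmb h ∧ ∃ d : Fin k, ∀ x, c (h x) = d) → PlusWins c := by
  rintro ⟨h, H, d, hc⟩
  refine ⟨d, sigmaOf h, ?_⟩
  intro a
  set x : Fin n → ℕ := extN (XL h (extF a) n) with hx
  have key : ∀ i : Fin n,
      playedBy (sigmaOf h) a i = h x i ∧ a i ≤ playedBy (sigmaOf h) a i := by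
    intro i
    have h1 := playedBy_sigma h a i
    have h2 : h (extN (XL h (extF a) (i.val + 1))) i = h x i := by
      apply H.2 i
      intro j hj
      have hj' : j.val < i.val + 1 := by
        rw [Fin.le_def] at hj; omega
      show (XL h (extF a) (i.val + 1)).getD j.val 0 = (XL h (extF a) n).getD j.val 0
      rw [XL_getD_stable h (extF a) (i.val + 1) n i.isLt j.val hj']
    have hplen : (XL h (extF a) i.val).length = i.val := XL_length h (extF a) i.val
    have h3 : a i ≤ h (extN (XL h (extF a) (i.val + 1))) i := by
      have hspec := pick_spec H (XL h (extF a) i.val) i hplen (a i)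
      have hei : extF a i.val = a i := by
        unfold extF
        rw [dif_pos i.isLt]
      have hXLs : XL h (extF a) (i.val + 1)
          = XL h (extF a) i.val ++ [pick h (XL h (extF a) i.val) (a i)] := by
        rw [show XL h (extF a) (i.val + 1) = XL h (extF a) i.val
          ++ [pick h (XL h (extF a) i.val) (extF a i.val)] from rfl, hei]
      rw [hXLs]
      exact hspec
    exact ⟨h1.trans h2, h1 ▸ h3⟩
  refine ⟨fun i => (key i).2, ?_⟩
  have hpb : playedBy (sigmaOf h) a = h x := funext fun i => (key i).1
  rw [hpb]
  exact hc x

end S13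


theorem stmt13 {n k : ℕ} (c : (Fin n → ℕ) → Fin k) :
    PlusWins c ↔
      ∃ h : (Fin n → ℕ) → (Fin n → ℕ), StrongLexEmb h ∧ ∃ d : Fin k, ∀ x, c (h x) = d := by
  exact ⟨S13.forward c, S13.backward c⟩
end
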